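/- arXiv:2403.17700 — 3 statements merged into one kernel-verified Lean document; each statement's English description precedes it below -/
import Mathlib

section
/- For every integer ℓ ≥ 1 and every x ∈ A_ℓ, the derivative of the jump transformation satisfies |G'(x)| ≥ ρ, where ρ > 1 is the constant from hypothesis (H5). -/
open Set Filter Topology Asymptotics MeasureTheory

noncomputable section

/-- The first passage time of `x` to the interval `(a,1)` under iteration of `T`
(`τ(x) = min {n ≥ 0 : Tⁿ x ∈ (a,1)}`). -/
def tau (T : ℝ → ℝ) (a : ℝ) (x : ℝ) : ℕ := sInf {n : ℕ | T^[n] x ∈ Set.Ioo a 1}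

/-- The jump transformation `G(x) = T^{1+τ(x)}(x)` of `T` on `(a,1)`. -/
def Gmap (T : ℝ → ℝ) (a : ℝ) (x : ℝ) : ℝ := T^[1 + tau T a x] x

/-- The sequence `a₀ = 1`, `a₁ = a`, `a_ℓ = ψ₀(a_{ℓ-1})`. -/
def aseq (ψ₀ : ℝ → ℝ) (a : ℝ) : ℕ → ℝ
  | 0 => 1
  | 1 => a
  | n + 2 => ψ₀ (aseq ψ₀ a (n + 1))

/-- The level sets `A_ℓ = (a_ℓ, a_{ℓ-1})` of the first passage function. -/
def Aset (ψ₀ : ℝ → ℝ) (a : ℝ) (ℓ : ℕ) : Set ℝ := Set.Ioo (aseq ψ₀ a ℓ) (aseq ψ₀ a (ℓ - 1))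

/-- The inverse branches `φ_ℓ = ψ₀^{ℓ-1} ∘ ψ₁` of the jump transformation. -/
def phib (ψ₀ ψ₁ : ℝ → ℝ) (ℓ : ℕ) : ℝ → ℝ := ψ₀^[ℓ - 1] ∘ ψ₁

/-- The induced potential `w(x) = ∑_{j=0}^{τ(x)} v(Tʲ x)`. -/
def indw (T : ℝ → ℝ) (a : ℝ) (v : ℝ → ℝ) (x : ℝ) : ℝ :=
  ∑ j ∈ Finset.range (tau T a x + 1), v (T^[j] x)

/-- The `C^h` norm `‖f‖_h = max_{0 ≤ j ≤ h} sup_{[0,1]} |f^{(j)}|` of a function on `[0,1]`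
(computed via the open interval `(0,1)`). -/
noncomputable def nrm {E : Type*} [NormedAddCommGroup E] [NormedSpace ℝ E]
    (h : ℕ) (f : ℝ → E) : ℝ :=
  (Finset.range (h + 1)).sup' Finset.nonempty_range_add_one fun j =>
    sSup ((fun x => ‖iteratedDerivWithin j f (Set.Ioo (0 : ℝ) 1) x‖) '' Set.Ioo (0 : ℝ) 1)

/-- Hypotheses (H1)–(H5) on the parabolic map `T`. -/
structure Hyp (T : ℝ → ℝ) (a : ℝ) (ψ₀ ψ₁ : ℝ → ℝ) (r : ℕ∞) (c α ε ρ : ℝ) : Prop where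
  ha : a ∈ Set.Ioo (0 : ℝ) 1
  hmaps : Set.MapsTo T (Set.Icc 0 1) (Set.Icc 0 1)
  mono0 : StrictMonoOn T (Set.Ioo 0 a)
  mono1 : StrictMonoOn T (Set.Ioo a 1) ∨ StrictAntiOn T (Set.Ioo a 1)
  full0 : closure (T '' Set.Ioo 0 a) = Set.Icc 0 1
  full1 : closure (T '' Set.Ioo a 1) = Set.Icc 0 1
  hr : 2 ≤ r
  smooth0 : ContDiffOn ℝ r T (Set.Ioc 0 a)
  smooth1 : ContDiffOn ℝ r T (Set.Icc a 1)
  inv0 : ∀ y ∈ Set.Ioo (0 : ℝ) 1, ψ₀ y ∈ Set.Ioo 0 a ∧ T (ψ₀ y) = y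
  inv0' : ∀ x ∈ Set.Ioo 0 a, ψ₀ (T x) = x
  inv1 : ∀ y ∈ Set.Ioo (0 : ℝ) 1, ψ₁ y ∈ Set.Ioo a 1 ∧ T (ψ₁ y) = y
  inv1' : ∀ x ∈ Set.Ioo a 1, ψ₁ (T x) = x
  hc : 0 < c
  hα : 0 < α
  fix0 : T 0 = 0
  dT0 : derivWithin T (Set.Icc 0 1) 0 = 1
  asymp : Filter.Tendsto (fun x => (deriv T x - 1) / (c * x ^ α)) (nhdsWithin 0 (Set.Ioi 0)) (nhds 1)
  hε : 0 < ε
  hρ : 1 < ρ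
  dmono : StrictMonoOn (deriv T) (Set.Ioo 0 ε)
  expand : ∀ x ∈ Set.Ico ε a ∪ Set.Ioo a 1, ρ ≤ |deriv T x|

/-- Hypothesis (H6) on the potential `v`: it is `C^k` on each branch interval and extends
to a `C^k` function on `[0,a]` and on `[a,1]`; `v 0` is declared to be the value at `0`
of the extension to `[0,a]`. -/
structure HypV (a : ℝ) (v : ℝ → ℝ) (k : ℕ∞) : Prop where
  ext0 : ∃ v0 : ℝ → ℝ, ContDiffOn ℝ k v0 (Set.Icc 0 a) ∧ Set.EqOn v v0 (Set.Ioo 0 a) ∧ v 0 = v0 0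
  ext1 : ∃ v1 : ℝ → ℝ, ContDiffOn ℝ k v1 (Set.Icc a 1) ∧ Set.EqOn v v1 (Set.Ioo a 1)

/-- Hypothesis (H7): `∑_n ‖e^{w∘φ_n}‖_h (1 + ‖φ_n‖_h^h) ≤ c_k` for all `h ≤ k`. -/
def H7 (T : ℝ → ℝ) (a : ℝ) (ψ₀ ψ₁ v : ℝ → ℝ) (k : ℕ) (ck : ℝ) : Prop :=
  ∀ h : ℕ, h ≤ k →
    Summable (fun n : ℕ =>
      nrm h (fun x => Real.exp (indw T a v (phib ψ₀ ψ₁ (n + 1) x))) *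
        (1 + nrm h (phib ψ₀ ψ₁ (n + 1)) ^ h)) ∧
    (∑' n : ℕ,
      nrm h (fun x => Real.exp (indw T a v (phib ψ₀ ψ₁ (n + 1) x))) *
        (1 + nrm h (phib ψ₀ ψ₁ (n + 1)) ^ h)) ≤ ck

/-- Composition `φ_β = φ_{β₁} ∘ ⋯ ∘ φ_{β_m}` along a list `β` of branch indices. -/
def phibList (ψ₀ ψ₁ : ℝ → ℝ) : List ℕ → ℝ → ℝ
  | [], x => x
  | n :: l, x => phib ψ₀ ψ₁ n (phibList ψ₀ ψ₁ l x)

/-- The weight `W_β(x) = exp (∑_{j=1}^m w(φ_{β_j  … β_m}(x)))`. -/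
def Wb (T : ℝ → ℝ) (a : ℝ) (ψ₀ ψ₁ v : ℝ → ℝ) : List ℕ → ℝ → ℝ
  | [], _ => 1
  | n :: l, x =>
      Real.exp (indw T a v (phib ψ₀ ψ₁ n (phibList ψ₀ ψ₁ l x))) * Wb T a ψ₀ ψ₁ v l x

/-- `Λ_m(z) = sup_{x ∈ (0,1)} ∑_{β ∈ ℕ_{≥1}^m} |z|^{|β|} W_β(x)`, as a function of `|z|`. -/
noncomputable def Lam (T : ℝ → ℝ) (a : ℝ) (ψ₀ ψ₁ v : ℝ → ℝ) (m : ℕ) (zn : ℝ) : ℝ :=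
  sSup ((fun x => ∑' β : Fin m → ℕ,
      zn ^ (m + ∑ i, β i) * Wb T a ψ₀ ψ₁ v (List.ofFn fun i => β i + 1) x) '' Set.Ioo (0 : ℝ) 1)

/-!
Orbits starting in `A_ℓ` spend `ℓ - 1` steps in the left branch `(0,a)` before landing in `(a,1)`,
so near such a point `G = T^ℓ` and `G'` is the product of `T'` along that orbit. On `(0,a)`
we have `|T'| ≥ 1`: this is (H5) on `[ε,a)`, and on `(0,ε)` the asymptotics (H4) give points
arbitrarily close to `0` with `T' > 1`, from which `T'` increases. The final factor, taken in
`(a,1)`, is at least `ρ`.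
-/

theorem hasDerivAt_iterate {𝕜 : Type*} [NontriviallyNormedField 𝕜] (f : 𝕜 → 𝕜) (x : 𝕜) (n : ℕ)
    (hf : ∀ j < n, DifferentiableAt 𝕜 f (f^[j] x)) :
    HasDerivAt f^[n] (∏ j ∈ Finset.range n, deriv f (f^[j] x)) x := by
  induction n with
  | zero => simpa using hasDerivAt_id x
  | succ n ih =>
    rw [Function.iterate_succ', Finset.prod_range_succ, mul_comm]
    exact (hf n n.lt_succ_self).hasDerivAt.comp x (ih fun j hj => hf j (hj.trans n.lt_succ_self))

namespace Hyp

variable {T : ℝ → ℝ} {a : ℝ} {ψ₀ ψ₁ : ℝ → ℝ} {r : ℕ∞} {c α ε ρ : ℝ}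

theorem aseq_succ_mem_Ioc (hT : Hyp T a ψ₀ ψ₁ r c α ε ρ) (n : ℕ) :
    aseq ψ₀ a (n + 1) ∈ Ioc 0 a := by
  induction n with
  | zero => exact ⟨hT.ha.1, le_rfl⟩
  | succ n ih => exact Ioo_subset_Ioc_self (hT.inv0 _ ⟨ih.1, ih.2.trans_lt hT.ha.2⟩).1

theorem aseq_add_two_mem_Ioo (hT : Hyp T a ψ₀ ψ₁ r c α ε ρ) (n : ℕ) :
    aseq ψ₀ a (n + 2) ∈ Ioo 0 a :=
  (hT.inv0 _ ⟨(hT.aseq_succ_mem_Ioc n).1, (hT.aseq_succ_mem_Ioc n).2.trans_lt hT.ha.2⟩).1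

theorem apply_aseq_add_two (hT : Hyp T a ψ₀ ψ₁ r c α ε ρ) (n : ℕ) :
    T (aseq ψ₀ a (n + 2)) = aseq ψ₀ a (n + 1) :=
  (hT.inv0 _ ⟨(hT.aseq_succ_mem_Ioc n).1, (hT.aseq_succ_mem_Ioc n).2.trans_lt hT.ha.2⟩).2

theorem apply_lt_one_of_mem_Ioo (hT : Hyp T a ψ₀ ψ₁ r c α ε ρ) {y : ℝ} (hy : y ∈ Ioo 0 a) : T y < 1 := by
  have hmid : (y + a) / 2 ∈ Ioo 0 a := ⟨by linarith [hy.1, hy.2], by linarith [hy.2]⟩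
  calc T y < T ((y + a) / 2) := hT.mono0 hy hmid (by linarith [hy.2])
    _ ≤ 1 := (hT.hmaps ⟨hmid.1.le, hmid.2.le.trans hT.ha.2.le⟩).2

theorem Aset_add_two_subset (hT : Hyp T a ψ₀ ψ₁ r c α ε ρ) (j : ℕ) :
    Aset ψ₀ a (j + 2) ⊆ Ioo 0 a := fun _ hy =>
  ⟨(hT.aseq_add_two_mem_Ioo j).1.trans hy.1, hy.2.trans_le (hT.aseq_succ_mem_Ioc j).2⟩

theorem mapsTo_Aset_add_two (hT : Hyp T a ψ₀ ψ₁ r c α ε ρ) (j : ℕ) :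
    MapsTo T (Aset ψ₀ a (j + 2)) (Aset ψ₀ a (j + 1)) := by
  intro y hy
  have hy0 := hT.Aset_add_two_subset j hy
  refine ⟨hT.apply_aseq_add_two j ▸ hT.mono0 (hT.aseq_add_two_mem_Ioo j) hy0 hy.1, ?_⟩
  cases j with
  | zero => exact hT.apply_lt_one_of_mem_Ioo hy0
  | succ j => exact hT.apply_aseq_add_two j ▸ hT.mono0 hy0 (hT.aseq_add_two_mem_Ioo j) hy.2

theorem iterate_mem_of_mem_Aset (hT : Hyp T a ψ₀ ψ₁ r c α ε ρ) (j : ℕ) {y : ℝ}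
    (hy : y ∈ Aset ψ₀ a (j + 1)) :
    (∀ i < j, T^[i] y ∈ Ioo 0 a) ∧ T^[j] y ∈ Ioo a 1 := by
  induction j generalizing y with
  | zero => exact ⟨fun i hi => absurd hi i.not_lt_zero, hy⟩
  | succ j ih =>
    obtain ⟨hleft, hright⟩ := ih (hT.mapsTo_Aset_add_two j hy)
    refine ⟨fun i hi => ?_, hright⟩
    cases i with
    | zero => exact hT.Aset_add_two_subset j hy
    | succ i => exact hleft i (Nat.lt_of_succ_lt_succ hi)

theorem tau_eq_of_mem_Aset (hT : Hyp T a ψ₀ ψ₁ r c α ε ρ) (m : ℕ) {x : ℝ}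
    (hx : x ∈ Aset ψ₀ a (m + 1)) : tau T a x = m := by
  obtain ⟨hleft, hright⟩ := hT.iterate_mem_of_mem_Aset m hx
  refine le_antisymm (Nat.sInf_le hright) (le_csInf ⟨m, hright⟩ fun n hn => ?_)
  exact not_lt.1 fun hnm => (hleft n hnm).2.not_gt hn.1

theorem differentiableAt (hT : Hyp T a ψ₀ ψ₁ r c α ε ρ) {y : ℝ}
    (hy : y ∈ Ioo 0 a ∪ Ioo a 1) : DifferentiableAt ℝ T y := by
  have hr : (r : WithTop ℕ∞) ≠ 0 := by
    exact_mod_cast (lt_of_lt_of_le (by norm_num) hT.hr).ne'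
  rcases hy with hy | hy
  · exact (hT.smooth0.contDiffAt (mem_of_superset (isOpen_Ioo.mem_nhds hy)
      Ioo_subset_Ioc_self)).differentiableAt hr
  · exact (hT.smooth1.contDiffAt (mem_of_superset (isOpen_Ioo.mem_nhds hy)
      Ioo_subset_Icc_self)).differentiableAt hr

theorem hasDerivAt_Gmap (hT : Hyp T a ψ₀ ψ₁ r c α ε ρ) (m : ℕ) {x : ℝ}
    (hx : x ∈ Aset ψ₀ a (m + 1)) :
    HasDerivAt (Gmap T a) (∏ j ∈ Finset.range (m + 1), deriv T (T^[j] x)) x := by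
  have hG : Gmap T a =ᶠ[𝓝 x] T^[m + 1] := by
    filter_upwards [isOpen_Ioo.mem_nhds hx] with y hy
    rw [Gmap, hT.tau_eq_of_mem_Aset m hy, add_comm]
  refine hG.hasDerivAt_iff.2 (hasDerivAt_iterate T x (m + 1) fun j hj => ?_)
  obtain ⟨hleft, hright⟩ := hT.iterate_mem_of_mem_Aset m hx
  rcases Nat.lt_succ_iff_lt_or_eq.1 hj with hj | rfl
  · exact hT.differentiableAt (Or.inl (hleft j hj))
  · exact hT.differentiableAt (Or.inr hright)

theorem eventually_one_lt_deriv (hT : Hyp T a ψ₀ ψ₁ r c α ε ρ) :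
    ∀ᶠ z in 𝓝[>] 0, 1 < deriv T z := by
  filter_upwards [hT.asymp.eventually (eventually_gt_nhds zero_lt_one), self_mem_nhdsWithin]
    with z hz hz0
  have hden : 0 < c * z ^ α := mul_pos hT.hc (Real.rpow_pos_of_pos hz0 α)
  linarith [(div_pos_iff_of_pos_right hden).1 hz]

theorem one_le_abs_deriv (hT : Hyp T a ψ₀ ψ₁ r c α ε ρ) {y : ℝ} (hy : y ∈ Ioo 0 a) :
    1 ≤ |deriv T y| := by
  rcases le_or_gt ε y with hεy | hyε
  · exact hT.hρ.le.trans (hT.expand y (Or.inl ⟨hεy, hy.2⟩))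
  · obtain ⟨z, hz, hzy⟩ := (hT.eventually_one_lt_deriv.and (Ioo_mem_nhdsGT hy.1)).exists
    calc 1 ≤ deriv T z := hz.le
      _ ≤ deriv T y := (hT.dmono.lt_iff_lt ⟨hzy.1, hzy.2.trans hyε⟩ ⟨hy.1, hyε⟩).2 hzy.2 |>.le
      _ ≤ |deriv T y| := le_abs_self _

end Hyp

/-- Lemma 2.2 (v): for every `ℓ ≥ 1` and every `x ∈ A_ℓ`, the derivative of the jump
transformation satisfies `|G'(x)| ≥ ρ`, where `ρ > 1` is the expansion constant of (H5). -/
theorem statement2 (T : ℝ → ℝ) (a : ℝ) (ψ₀ ψ₁ : ℝ → ℝ) (r : ℕ∞) (c α ε ρ : ℝ)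
    (hT : Hyp T a ψ₀ ψ₁ r c α ε ρ) (ℓ : ℕ) (hℓ : 1 ≤ ℓ) (x : ℝ) (hx : x ∈ Aset ψ₀ a ℓ) :
    ρ ≤ |deriv (Gmap T a) x| := by
  obtain ⟨m, rfl⟩ := Nat.exists_eq_add_of_le' hℓ
  obtain ⟨hleft, hright⟩ := hT.iterate_mem_of_mem_Aset m hx
  have hprod : 1 ≤ ∏ j ∈ Finset.range m, |deriv T (T^[j] x)| :=
    Finset.one_le_prod fun j hj => hT.one_le_abs_deriv (hleft j (Finset.mem_range.1 hj))
  rw [(hT.hasDerivAt_Gmap m hx).deriv, Finset.abs_prod, Finset.prod_range_succ]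
  exact (hT.expand _ (Or.inr hright)).trans (le_mul_of_one_le_left (abs_nonneg _) hprod)

end
end

section
/- Let φ : [0,1] → ℝ be C^1 with sup_{x∈[0,1]} |φ'(x)| < 1, φ(0) > 0 and φ(1) < 1, and let x_* ∈ (0,1) be its unique fixed point. Let W : [0,1] → ℝ be continuous, let γ : ℝ → [0,∞) be a C^∞ function with support contained in [0,1] and ∫ γ = 1, and set γ_ε(x) := ε^{−1} γ(x/ε) for ε > 0. Then lim_{ε→0⁺} ∫_0^1 γ_ε(φ(x) − x)·W(x) dx = W(x_*)/|1 − φ'(x_*)|. -/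
open Set Filter Topology Asymptotics MeasureTheory

noncomputable section

/-- Flat trace of a weighted composition operator with a contracting `φ`: if `φ : [0,1] → ℝ` is
`C¹` with `sup |φ'| ≤ κ < 1`, `φ(0) > 0`, `φ(1) < 1`, with (unique) fixed point `x⋆ ∈ (0,1)`,
`W` is continuous on `[0,1]`, and `γ ≥ 0` is `C^∞` supported in `[0,1]` with `∫ γ = 1`, then
`∫₀¹ γ_ε(φ(x) - x) W(x) dx → W(x⋆)/|1 - φ'(x⋆)|` as `ε → 0⁺`, where `γ_ε(x) = ε⁻¹ γ(x/ε)`. -/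
theorem statement12 (φ W γ : ℝ → ℝ) (κ : ℝ) (xs : ℝ)
    (hφ : ContDiffOn ℝ 1 φ (Set.Icc 0 1))
    (hκ : κ < 1) (hφd : ∀ x ∈ Set.Icc (0 : ℝ) 1, |derivWithin φ (Set.Icc 0 1) x| ≤ κ)
    (hφ0 : 0 < φ 0) (hφ1 : φ 1 < 1)
    (hxs : xs ∈ Set.Ioo (0 : ℝ) 1) (hfix : φ xs = xs)
    (huniq : ∀ y ∈ Set.Icc (0 : ℝ) 1, φ y = y → y = xs)
    (hW : ContinuousOn W (Set.Icc 0 1))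
    (hγ : ContDiff ℝ (⊤ : ℕ∞) γ) (hγ0 : ∀ x, 0 ≤ γ x) (hγs : Function.support γ ⊆ Set.Icc 0 1)
    (hγ1 : ∫ x, γ x = 1) :
    Filter.Tendsto (fun e : ℝ => ∫ x in (0 : ℝ)..1, e⁻¹ * γ ((φ x - x) / e) * W x)
      (nhdsWithin 0 (Set.Ioi 0))
      (nhds (W xs / |1 - derivWithin φ (Set.Icc 0 1) xs|)) := by
  set I : Set ℝ := Set.Icc 0 1 with hI
  set d : ℝ → ℝ := fun x => derivWithin φ I x - 1 with hd
  set g : ℝ → ℝ := fun x => φ x - x with hgdef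
  have hud : UniqueDiffOn ℝ I := uniqueDiffOn_Icc zero_lt_one
  have hdcont : ContinuousOn d I :=
    (hφ.continuousOn_derivWithin hud le_rfl).sub continuousOn_const
  have hdneg : ∀ x ∈ I, d x < 0 := by
    intro x hx
    have h1 : derivWithin φ I x ≤ κ := (le_abs_self _).trans (hφd x hx)
    simp only [hd]; linarith
  have hdpos : ∀ x ∈ I, 0 < -d x := fun x hx => neg_pos.2 (hdneg x hx)
  have hgcont : ContinuousOn g I := hφ.continuousOn.sub continuousOn_id
  have hgderiv : ∀ x ∈ I, HasDerivWithinAt g (d x) I x := by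
    intro x hx
    exact ((hφ.differentiableOn one_ne_zero x hx).hasDerivWithinAt).sub (hasDerivWithinAt_id x I)
  have hγof : ∀ y : ℝ, y ∉ Set.Icc (0:ℝ) 1 → γ y = 0 := by
    intro y hy
    by_contra h
    exact hy (hγs h)
  have hxsI : xs ∈ I := Set.mem_Icc.2 ⟨hxs.1.le, hxs.2.le⟩
  have hgne : ∀ x ∈ I, x ≠ xs → g x ≠ 0 := by
    intro x hx hne h0
    exact hne (huniq x hx (by simpa [hgdef, sub_eq_zero] using h0))
  have hg0 : 0 < g 0 := by simpa [hgdef] using hφ0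
  have hg1 : g 1 < 0 := by simp only [hgdef]; linarith
  -- the peak family
  set P : ℝ → ℝ → ℝ := fun e x => e⁻¹ * γ (g x / e) * (-(d x)) with hP
  set F : ℝ → ℝ := fun x => W x / (-(d x)) with hF
  have key : Filter.Tendsto (fun e : ℝ => ∫ x in I, P e x • F x) (𝓝[>] (0:ℝ))
      (𝓝 (F xs)) := by
    apply tendsto_setIntegral_peak_smul_of_integrableOn_of_tendsto
      measurableSet_Icc measurableSet_Icc subset_rfl self_mem_nhdsWithin
      isCompact_Icc.measure_lt_top.ne
    · -- nonneg
      filter_upwards [self_mem_nhdsWithin] with e (he : e ∈ Set.Ioi (0:ℝ))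
      intro x hx
      exact mul_nonneg (mul_nonneg (inv_nonneg.2 (le_of_lt he)) (hγ0 _)) (hdpos x hx).le
    · -- uniform convergence away from xs
      intro u hu hxu
      have hK : IsCompact (I \ u) := isCompact_Icc.diff hu
      rcases (I \ u).eq_empty_or_nonempty with hKe | hKne
      · rw [hI] at hKe; rw [hKe]; exact tendstoUniformlyOn_empty
      · obtain ⟨x₀, hx₀K, hmin⟩ := hK.exists_isMinOn hKne
          ((hgcont.mono (Set.diff_subset)).abs)
        have hδ : 0 < |g x₀| := by
          refine abs_pos.2 (hgne x₀ hx₀K.1 ?_)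
          intro h; exact hx₀K.2 (h ▸ hxu)
        rw [Metric.tendstoUniformlyOn_iff]
        intro ε hε
        filter_upwards [Ioo_mem_nhdsGT_of_mem (Set.left_mem_Ico.2 hδ)] with e he x hxK
        have hlb : |g x₀| ≤ |g x| := hmin hxK
        have hPe : P e x = 0 := by
          have hz : γ (g x / e) = 0 := by
            apply hγof
            rintro ⟨h1, h2⟩
            rcases lt_or_ge (g x) 0 with hgx | hgx
            · have : g x / e < 0 := div_neg_of_neg_of_pos hgx he.1
              linarith
            · have hgx' : e < g x := lt_of_lt_of_le he.2 (by rwa [abs_of_nonneg hgx] at hlb)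
              have : (1:ℝ) < g x / e := (one_lt_div he.1).2 hgx'
              linarith
          simp [hP, hz]
        simpa [hPe] using hε
    · -- integral tends to 1
      have heq : ∀ᶠ e in 𝓝[>] (0:ℝ), (∫ x in I, P e x) = 1 := by
        filter_upwards [Ioo_mem_nhdsGT_of_mem (Set.left_mem_Ico.2 hg0)] with e he
        have hepos : 0 < e := he.1
        have h1 : (∫ x in I, P e x) = ∫ x in (0:ℝ)..1, P e x := by
          rw [hI, integral_Icc_eq_integral_Ioc, ← intervalIntegral.integral_of_le zero_le_one]
        set G : ℝ → ℝ := fun u => -(e⁻¹ * γ (u / e)) with hG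
        have hGc : Continuous G :=
          (continuous_const.mul (hγ.continuous.comp (continuous_id.div_const e))).neg
        have h2 : (∫ x in (0:ℝ)..1, d x • (G ∘ g) x) = ∫ u in (g 0)..(g 1), G u := by
          apply intervalIntegral.integral_comp_smul_deriv'' (f := g) (f' := d)
          · rw [Set.uIcc_of_le (by norm_num : (0:ℝ) ≤ 1)]; exact hgcont
          · intro x hx
            rw [min_eq_left zero_le_one, max_eq_right zero_le_one] at hx
            refine (hgderiv x ⟨hx.1.le, hx.2.le⟩).mono_of_mem_nhdsWithin ?_
            have h3 : Set.Ioi x ∩ Set.Iio 1 ∈ 𝓝[Set.Ioi x] x :=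
              inter_mem_nhdsWithin _ (Iio_mem_nhds hx.2)
            refine Filter.mem_of_superset h3 ?_
            rintro y ⟨hy1, hy2⟩
            exact ⟨le_of_lt (lt_trans hx.1 hy1), hy2.le⟩
          · rw [Set.uIcc_of_le (by norm_num : (0:ℝ) ≤ 1)]; exact hdcont
          · exact hGc.continuousOn
        have h4 : ∀ x, P e x = d x • G (g x) := by
          intro x; simp only [hP, hG, smul_eq_mul]; ring
        have h5 : (∫ u in (g 0)..(g 1), G u) = ∫ u in (g 1)..(g 0), e⁻¹ * γ (u / e) := by
          rw [intervalIntegral.integral_symm, ← intervalIntegral.integral_neg]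
          simp [hG]
        have h6 : (∫ u in (g 1)..(g 0), e⁻¹ * γ (u / e)) = ∫ u : ℝ, e⁻¹ * γ (u / e) := by
          rw [intervalIntegral.integral_of_le (le_of_lt (lt_trans hg1 hg0))]
          apply setIntegral_eq_integral_of_forall_compl_eq_zero
          intro u hu
          have hz : γ (u / e) = 0 := by
            apply hγof
            rintro ⟨hu1, hu2⟩
            apply hu
            have hu0 : 0 ≤ u := by
              have := mul_nonneg hu1 hepos.le
              rwa [div_mul_cancel₀ _ hepos.ne'] at this
            have hue : u ≤ e := (div_le_one hepos).1 hu2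
            exact ⟨lt_of_lt_of_le hg1 hu0, hue.trans he.2.le⟩
          simp [hz]
        have h7 : (∫ u : ℝ, e⁻¹ * γ (u / e)) = 1 := by
          rw [MeasureTheory.integral_const_mul, MeasureTheory.Measure.integral_comp_div γ e, hγ1,
            smul_eq_mul, mul_one, abs_of_pos hepos, inv_mul_cancel₀ hepos.ne']
        calc (∫ x in I, P e x) = ∫ x in (0:ℝ)..1, P e x := h1
          _ = ∫ x in (0:ℝ)..1, d x • (G ∘ g) x := by simp only [h4, Function.comp]
          _ = 1 := by rw [h2, h5, h6, h7]
      exact Filter.Tendsto.congr' (heq.mono fun e h => h.symm) tendsto_const_nhds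
    · -- measurability
      filter_upwards [self_mem_nhdsWithin] with e (he : e ∈ Set.Ioi (0:ℝ))
      apply ContinuousOn.aestronglyMeasurable _ measurableSet_Icc
      exact (continuousOn_const.mul
        ((hγ.continuous.comp (continuous_id.div_const e)).comp_continuousOn hgcont)).mul hdcont.neg
    · -- integrability of F
      exact ContinuousOn.integrableOn_Icc
        (hW.div hdcont.neg (fun x hx => (hdpos x hx).ne'))
    · -- continuity at xs
      exact ((hW.div hdcont.neg (fun x hx => (hdpos x hx).ne')) xs hxsI).tendsto
  have hval : F xs = W xs / |1 - derivWithin φ I xs| := by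
    have h1 : -(d xs) = 1 - derivWithin φ I xs := by simp only [hd]; ring
    have h2 : (0:ℝ) < 1 - derivWithin φ I xs := h1 ▸ hdpos xs hxsI
    rw [hF, abs_of_pos h2, ← h1]
  rw [← hval] at *
  refine key.congr fun e => ?_
  rw [hI, integral_Icc_eq_integral_Ioc, ← intervalIntegral.integral_of_le zero_le_one]
  apply intervalIntegral.integral_congr
  intro x hx
  rw [Set.uIcc_of_le (by norm_num : (0:ℝ) ≤ 1)] at hx
  have hne : -(d x) ≠ 0 := (hdpos x hx).ne'
  simp only [hP, hF, smul_eq_mul]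
  rw [mul_assoc, mul_comm (-(d x)), div_mul_cancel₀ _ hne]

end
end

section
/- For every z ∈ ℂ with |z| ≤ 1, every f ∈ C^k([0,1]) and every x ∈ (0,1), all the series below converge absolutely and the identity (1 − Q_w(z))((1 − z·L_{0,v})f)(x) = f(x) − z·(L_v f)(x) holds, where L_{0,v}f := (e^v·f)∘ψ_0, L_{1,v}f := (e^v·f)∘ψ_1, L_v := L_{0,v} + L_{1,v}, and (Q_w(z)g)(x) := Σ_{n≥1} z^n e^{w(φ_n(x))} g(φ_n(x)). -/
open Set Filter Topology Asymptotics MeasureTheory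

noncomputable section

/-!
Since `φ_{n+2} = ψ₀ ∘ φ_{n+1}` and the first passage time drops by one under `T`, we have
`w ∘ φ_{n+2} = w ∘ φ_{n+1} + v ∘ φ_{n+2}`. Hence the `n`-th term of `Q_w(z) (1 - z L_{0,v}) f`
at `x` is `q_n - q_{n+1}`, where `q_n = z^{n+1} e^{w(φ_{n+1} x)} f(φ_{n+1} x)` is the `n`-th term of
`Q_w(z) f`, and the series telescopes to `q_0 = z e^{v(ψ₁ x)} f(ψ₁ x)`. Absolute convergence
follows from `|q_n| ≤ sup |f| · ‖e^{w ∘ φ_{n+1}}‖_0`, which is summable by (H7) with `h = 0`;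
the sup-norms are finite because `v` is bounded and `w ∘ φ_{n+1}` is a sum of `n + 1` values of `v`.
-/

namespace Set.LeftInvOn

variable {α : Type*} {s : Set α} {f g : α → α}

theorem iterate (h : LeftInvOn f g s) (hg : MapsTo g s s) (n : ℕ) : LeftInvOn f^[n] g^[n] s := by
  induction n with
  | zero => exact fun _ _ => rfl
  | succ n ih =>
    intro x hx
    rw [Function.iterate_succ_apply, Function.iterate_succ_apply', h (hg.iterate n hx), ih hx]

theorem iterate_apply_iterate_of_le (h : LeftInvOn f g s) (hg : MapsTo g s s) {x : α}
    (hx : x ∈ s) {j m : ℕ} (hjm : j ≤ m) : f^[j] (g^[m] x) = g^[m - j] x := by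
  rw [← Nat.add_sub_cancel' hjm, Function.iterate_add_apply, Nat.add_sub_cancel_left,
    h.iterate hg j (hg.iterate _ hx)]

end Set.LeftInvOn

theorem summable_norm_sub_succ {E : Type*} [SeminormedAddCommGroup E] {u : ℕ → E}
    (hu : Summable fun n => ‖u n‖) : Summable fun n => ‖u n - u (n + 1)‖ :=
  (hu.add ((summable_nat_add_iff 1).2 hu)).of_nonneg_of_le (fun _ => norm_nonneg _)
    fun _ => norm_sub_le _ _

theorem hasSum_sub_succ {G : Type*} [AddCommGroup G] [TopologicalSpace G]
    [IsTopologicalAddGroup G] {u : ℕ → G} (hu : Summable fun n => u (n + 1)) :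
    HasSum (fun n => u n - u (n + 1)) (u 0) := by
  simpa using hu.hasSum.zero_add.sub hu.hasSum

theorem norm_le_nrm_zero {E : Type*} [NormedAddCommGroup E] [NormedSpace ℝ E] {f : ℝ → E}
    (hf : BddAbove ((fun x => ‖f x‖) '' Ioo 0 1)) {x : ℝ} (hx : x ∈ Ioo 0 1) :
    ‖f x‖ ≤ nrm 0 f := by
  simpa [nrm] using le_csSup hf (mem_image_of_mem _ hx)

theorem H7.summable_nrm_zero {T : ℝ → ℝ} {a : ℝ} {ψ₀ ψ₁ v : ℝ → ℝ} {k : ℕ} {ck : ℝ}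
    (h7 : H7 T a ψ₀ ψ₁ v k ck) :
    Summable fun n => nrm 0 fun x => Real.exp (indw T a v (phib ψ₀ ψ₁ (n + 1) x)) := by
  simpa [one_add_one_eq_two, summable_mul_right_iff] using (h7 0 k.zero_le).1

theorem HypV.exists_le {a : ℝ} {v : ℝ → ℝ} {k : ℕ∞} (hv : HypV a v k) :
    ∃ M, ∀ t ∈ Ioo 0 a ∪ Ioo a 1, v t ≤ M := by
  obtain ⟨v₀, hv₀, heq₀, -⟩ := hv.ext0
  obtain ⟨v₁, hv₁, heq₁⟩ := hv.ext1
  obtain ⟨M₀, hM₀⟩ := isCompact_Icc.bddAbove_image hv₀.continuousOn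
  obtain ⟨M₁, hM₁⟩ := isCompact_Icc.bddAbove_image hv₁.continuousOn
  refine ⟨max M₀ M₁, ?_⟩
  rintro t (ht | ht)
  · rw [heq₀ ht]
    exact (hM₀ (mem_image_of_mem _ (Ioo_subset_Icc_self ht))).trans (le_max_left _ _)
  · rw [heq₁ ht]
    exact (hM₁ (mem_image_of_mem _ (Ioo_subset_Icc_self ht))).trans (le_max_right _ _)

theorem phib_succ_apply (ψ₀ ψ₁ : ℝ → ℝ) (n : ℕ) (y : ℝ) :
    phib ψ₀ ψ₁ (n + 1) y = ψ₀^[n] (ψ₁ y) :=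
  rfl

section Orbit

variable {T ψ₀ v : ℝ → ℝ} {a p : ℝ}

theorem iterate_mem_Ioo_union (ha : a ∈ Ioo 0 1) (hψ₀ : MapsTo ψ₀ (Ioo 0 1) (Ioo 0 a))
    (hp : p ∈ Ioo a 1) : ∀ m, ψ₀^[m] p ∈ Ioo 0 a ∪ Ioo a 1
  | 0 => Or.inr hp
  | m + 1 => by
    rw [Function.iterate_succ_apply']
    refine Or.inl (hψ₀ ?_)
    rcases iterate_mem_Ioo_union ha hψ₀ hp m with h | h
    · exact ⟨h.1, h.2.trans ha.2⟩
    · exact ⟨ha.1.trans h.1, h.2⟩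

theorem tau_iterate (ha : a ∈ Ioo 0 1) (hψ₀ : MapsTo ψ₀ (Ioo 0 1) (Ioo 0 a))
    (hT : LeftInvOn T ψ₀ (Ioo 0 1)) (hp : p ∈ Ioo a 1) (m : ℕ) : tau T a (ψ₀^[m] p) = m := by
  have hψ₀' : MapsTo ψ₀ (Ioo 0 1) (Ioo 0 1) := hψ₀.mono_right (Ioo_subset_Ioo_right ha.2.le)
  have hp' : p ∈ Ioo 0 1 := ⟨ha.1.trans hp.1, hp.2⟩
  have hTm : T^[m] (ψ₀^[m] p) ∈ Ioo a 1 := by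
    rwa [hT.iterate_apply_iterate_of_le hψ₀' hp' le_rfl, Nat.sub_self]
  refine le_antisymm (Nat.sInf_le hTm)
    (le_csInf ⟨m, hTm⟩ fun j (hj : T^[j] (ψ₀^[m] p) ∈ Ioo a 1) => ?_)
  by_contra! hjm
  rw [hT.iterate_apply_iterate_of_le hψ₀' hp' hjm.le,
    ← Nat.succ_pred_eq_of_pos (Nat.sub_pos_of_lt hjm), Function.iterate_succ_apply'] at hj
  exact (hψ₀ (hψ₀'.iterate _ hp')).2.not_gt hj.1

theorem indw_iterate (ha : a ∈ Ioo 0 1) (hψ₀ : MapsTo ψ₀ (Ioo 0 1) (Ioo 0 a))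
    (hT : LeftInvOn T ψ₀ (Ioo 0 1)) (hp : p ∈ Ioo a 1) (m : ℕ) :
    indw T a v (ψ₀^[m] p) = ∑ j ∈ Finset.range (m + 1), v (ψ₀^[j] p) := by
  have hψ₀' : MapsTo ψ₀ (Ioo 0 1) (Ioo 0 1) := hψ₀.mono_right (Ioo_subset_Ioo_right ha.2.le)
  have hp' : p ∈ Ioo 0 1 := ⟨ha.1.trans hp.1, hp.2⟩
  rw [indw, tau_iterate ha hψ₀ hT hp, ← Finset.sum_range_reflect]
  refine Finset.sum_congr rfl fun j hj => ?_
  have hjm := Finset.mem_range.1 hj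
  rw [hT.iterate_apply_iterate_of_le hψ₀' hp' (by omega)]
  congr 2
  omega

theorem indw_iterate_succ (ha : a ∈ Ioo 0 1) (hψ₀ : MapsTo ψ₀ (Ioo 0 1) (Ioo 0 a))
    (hT : LeftInvOn T ψ₀ (Ioo 0 1)) (hp : p ∈ Ioo a 1) (m : ℕ) :
    indw T a v (ψ₀ (ψ₀^[m] p)) = indw T a v (ψ₀^[m] p) + v (ψ₀ (ψ₀^[m] p)) := by
  rw [← Function.iterate_succ_apply' ψ₀ m p, indw_iterate ha hψ₀ hT hp,
    indw_iterate ha hψ₀ hT hp, Finset.sum_range_succ _ (m + 1)]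

theorem indw_iterate_le (ha : a ∈ Ioo 0 1) (hψ₀ : MapsTo ψ₀ (Ioo 0 1) (Ioo 0 a))
    (hT : LeftInvOn T ψ₀ (Ioo 0 1)) (hp : p ∈ Ioo a 1) {M : ℝ}
    (hM : ∀ t ∈ Ioo 0 a ∪ Ioo a 1, v t ≤ M) (m : ℕ) : indw T a v (ψ₀^[m] p) ≤ (m + 1) * M := by
  rw [indw_iterate ha hψ₀ hT hp]
  calc _ ≤ ∑ _j ∈ Finset.range (m + 1), M :=
        Finset.sum_le_sum fun j _ => hM _ (iterate_mem_Ioo_union ha hψ₀ hp j)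
    _ = (m + 1) * M := by simp

theorem exp_indw_iterate_le_nrm (ha : a ∈ Ioo 0 1) (hψ₀ : MapsTo ψ₀ (Ioo 0 1) (Ioo 0 a))
    (hT : LeftInvOn T ψ₀ (Ioo 0 1)) (hψ₁ : MapsTo ψ₁ (Ioo 0 1) (Ioo a 1)) {M : ℝ}
    (hM : ∀ t ∈ Ioo 0 a ∪ Ioo a 1, v t ≤ M) {x : ℝ} (hx : x ∈ Ioo 0 1) (n : ℕ) :
    Real.exp (indw T a v (ψ₀^[n] (ψ₁ x))) ≤
      nrm 0 fun y => Real.exp (indw T a v (phib ψ₀ ψ₁ (n + 1) y)) := by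
  refine (Real.le_norm_self _).trans
    (norm_le_nrm_zero (f := fun y => Real.exp (indw T a v (phib ψ₀ ψ₁ (n + 1) y)))
      ⟨Real.exp ((n + 1) * M), ?_⟩ hx)
  rintro _ ⟨y, hy, rfl⟩
  show ‖Real.exp (indw T a v (ψ₀^[n] (ψ₁ y)))‖ ≤ _
  rw [Real.norm_of_nonneg (Real.exp_pos _).le]
  exact Real.exp_le_exp.2 (indw_iterate_le ha hψ₀ hT (hψ₁ hy) hM n)

end Orbit

/-- The `n`-th term of the series `(Q_w(z) f)(x)`. -/
def qTerm (T : ℝ → ℝ) (a : ℝ) (ψ₀ ψ₁ v : ℝ → ℝ) (z : ℂ) (f : ℝ → ℂ) (x : ℝ) (n : ℕ) : ℂ :=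
  z ^ (n + 1) * Real.exp (indw T a v (phib ψ₀ ψ₁ (n + 1) x)) * f (phib ψ₀ ψ₁ (n + 1) x)

section QTerm

variable {T ψ₀ ψ₁ v : ℝ → ℝ} {a : ℝ} {z : ℂ} {f : ℝ → ℂ} {x : ℝ}

theorem qTerm_zero (ha : a ∈ Ioo 0 1) (hψ₀ : MapsTo ψ₀ (Ioo 0 1) (Ioo 0 a))
    (hT : LeftInvOn T ψ₀ (Ioo 0 1)) (hx : ψ₁ x ∈ Ioo a 1) :
    qTerm T a ψ₀ ψ₁ v z f x 0 = z * Real.exp (v (ψ₁ x)) * f (ψ₁ x) := by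
  have h := indw_iterate (v := v) ha hψ₀ hT hx 0
  simp only [Function.iterate_zero_apply] at h
  simp [qTerm, phib, h]

theorem qTerm_sub_qTerm_succ (ha : a ∈ Ioo 0 1) (hψ₀ : MapsTo ψ₀ (Ioo 0 1) (Ioo 0 a))
    (hT : LeftInvOn T ψ₀ (Ioo 0 1)) (hx : ψ₁ x ∈ Ioo a 1) (n : ℕ) :
    qTerm T a ψ₀ ψ₁ v z f x n - qTerm T a ψ₀ ψ₁ v z f x (n + 1) =
      z ^ (n + 1) * Real.exp (indw T a v (phib ψ₀ ψ₁ (n + 1) x)) *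
        (f (phib ψ₀ ψ₁ (n + 1) x) -
          z * Real.exp (v (ψ₀ (phib ψ₀ ψ₁ (n + 1) x))) * f (ψ₀ (phib ψ₀ ψ₁ (n + 1) x))) := by
  simp only [qTerm, phib_succ_apply, indw_iterate_succ ha hψ₀ hT hx,
    Function.iterate_succ_apply', Real.exp_add]
  push_cast
  ring

theorem summable_norm_qTerm (ha : a ∈ Ioo 0 1) (hψ₀ : MapsTo ψ₀ (Ioo 0 1) (Ioo 0 a))
    (hT : LeftInvOn T ψ₀ (Ioo 0 1)) (hψ₁ : MapsTo ψ₁ (Ioo 0 1) (Ioo a 1)) {M : ℝ}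
    (hM : ∀ t ∈ Ioo 0 a ∪ Ioo a 1, v t ≤ M) {k : ℕ} {ck : ℝ} (h7 : H7 T a ψ₀ ψ₁ v k ck)
    (hz : ‖z‖ ≤ 1) {Mf : ℝ} (hf : ∀ y ∈ Icc 0 1, ‖f y‖ ≤ Mf) (hx : x ∈ Ioo 0 1) :
    Summable fun n => ‖qTerm T a ψ₀ ψ₁ v z f x n‖ := by
  refine (h7.summable_nrm_zero.mul_right Mf).of_nonneg_of_le (fun _ => norm_nonneg _)
    fun n => ?_
  have hweight := exp_indw_iterate_le_nrm ha hψ₀ hT hψ₁ hM hx n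
  have horbit : Ioo 0 a ∪ Ioo a 1 ⊆ Icc (0 : ℝ) 1 :=
    union_subset (Ioo_subset_Icc_self.trans (Icc_subset_Icc_right ha.2.le))
      (Ioo_subset_Icc_self.trans (Icc_subset_Icc_left ha.1.le))
  calc ‖qTerm T a ψ₀ ψ₁ v z f x n‖
      = ‖z‖ ^ (n + 1) * (Real.exp (indw T a v (ψ₀^[n] (ψ₁ x))) * ‖f (ψ₀^[n] (ψ₁ x))‖) := by
        simp [qTerm, phib_succ_apply, mul_assoc]
    _ ≤ 1 * ((nrm 0 fun y => Real.exp (indw T a v (phib ψ₀ ψ₁ (n + 1) y))) * Mf) :=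
        mul_le_mul (pow_le_one₀ (norm_nonneg z) hz)
          (mul_le_mul hweight (hf _ (horbit (iterate_mem_Ioo_union ha hψ₀ (hψ₁ hx) n)))
            (norm_nonneg _) ((Real.exp_pos _).le.trans hweight))
          (by positivity) zero_le_one
    _ = _ := one_mul _

end QTerm

theorem statement15_general (T : ℝ → ℝ) (a : ℝ) (ψ₀ ψ₁ : ℝ → ℝ) (r : ℕ∞) (c α ε ρ : ℝ)
    (hT : Hyp T a ψ₀ ψ₁ r c α ε ρ) (v : ℝ → ℝ) (k : ℕ)
    (hv : HypV a v k) (ck : ℝ) (h7 : H7 T a ψ₀ ψ₁ v k ck)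
    (z : ℂ) (hz : ‖z‖ ≤ 1)
    (f : ℝ → ℂ) (hf : ContDiffOn ℝ k f (Set.Icc 0 1)) (x : ℝ) (hx : x ∈ Set.Ioo (0 : ℝ) 1) :
    Summable (fun n : ℕ => ‖z ^ (n + 1) * Real.exp (indw T a v (phib ψ₀ ψ₁ (n + 1) x)) *
        (f (phib ψ₀ ψ₁ (n + 1) x) -
          z * Real.exp (v (ψ₀ (phib ψ₀ ψ₁ (n + 1) x))) * f (ψ₀ (phib ψ₀ ψ₁ (n + 1) x)))‖) ∧
    (f x - z * Real.exp (v (ψ₀ x)) * f (ψ₀ x)) -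
        ∑' n : ℕ, z ^ (n + 1) * Real.exp (indw T a v (phib ψ₀ ψ₁ (n + 1) x)) *
          (f (phib ψ₀ ψ₁ (n + 1) x) -
            z * Real.exp (v (ψ₀ (phib ψ₀ ψ₁ (n + 1) x))) * f (ψ₀ (phib ψ₀ ψ₁ (n + 1) x)))
      = f x - z * (Real.exp (v (ψ₀ x)) * f (ψ₀ x) + Real.exp (v (ψ₁ x)) * f (ψ₁ x)) := by
  have hψ₀ : MapsTo ψ₀ (Ioo 0 1) (Ioo 0 a) := fun y hy => (hT.inv0 y hy).1
  have hTψ₀ : LeftInvOn T ψ₀ (Ioo 0 1) := fun y hy => (hT.inv0 y hy).2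
  have hψ₁ : MapsTo ψ₁ (Ioo 0 1) (Ioo a 1) := fun y hy => (hT.inv1 y hy).1
  obtain ⟨M, hM⟩ := hv.exists_le
  obtain ⟨Mf, hMf⟩ := isCompact_Icc.exists_bound_of_continuousOn hf.continuousOn
  have hq := summable_norm_qTerm hT.ha hψ₀ hTψ₀ hψ₁ hM h7 hz hMf hx
  simp only [← qTerm_sub_qTerm_succ hT.ha hψ₀ hTψ₀ (hψ₁ hx),
    (hasSum_sub_succ ((summable_nat_add_iff 1).2 hq.of_norm)).tsum_eq,
    qTerm_zero hT.ha hψ₀ hTψ₀ (hψ₁ hx)]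
  exact ⟨summable_norm_sub_succ hq, by ring⟩

/-- The operator identity `(1 - Q_w(z))(1 - z L_{0,v}) = 1 - z L_v` of equation (4.2),
pointwise on `(0,1)`: for `|z| ≤ 1`, `f ∈ C^k([0,1])` and `x ∈ (0,1)`, the series converge
absolutely and `(1 - Q_w(z))((1 - z L_{0,v})f)(x) = f(x) - z (L_v f)(x)`, where
`L_{0,v} f = (e^v f) ∘ ψ₀`, `L_{1,v} f = (e^v f) ∘ ψ₁` and `L_v = L_{0,v} + L_{1,v}`. -/
theorem statement15 (T : ℝ → ℝ) (a : ℝ) (ψ₀ ψ₁ : ℝ → ℝ) (r : ℕ∞) (c α ε ρ : ℝ)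
    (hT : Hyp T a ψ₀ ψ₁ r c α ε ρ) (v : ℝ → ℝ) (k : ℕ) (hk : (k : ℕ∞) < r)
    (hv : HypV a v k) (ck : ℝ) (h7 : H7 T a ψ₀ ψ₁ v k ck)
    (z : ℂ) (hz : ‖z‖ ≤ 1)
    (f : ℝ → ℂ) (hf : ContDiffOn ℝ k f (Set.Icc 0 1)) (x : ℝ) (hx : x ∈ Set.Ioo (0 : ℝ) 1) :
    Summable (fun n : ℕ => ‖z ^ (n + 1) * Real.exp (indw T a v (phib ψ₀ ψ₁ (n + 1) x)) *
        (f (phib ψ₀ ψ₁ (n + 1) x) -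
          z * Real.exp (v (ψ₀ (phib ψ₀ ψ₁ (n + 1) x))) * f (ψ₀ (phib ψ₀ ψ₁ (n + 1) x)))‖) ∧
    (f x - z * Real.exp (v (ψ₀ x)) * f (ψ₀ x)) -
        ∑' n : ℕ, z ^ (n + 1) * Real.exp (indw T a v (phib ψ₀ ψ₁ (n + 1) x)) *
          (f (phib ψ₀ ψ₁ (n + 1) x) -
            z * Real.exp (v (ψ₀ (phib ψ₀ ψ₁ (n + 1) x))) * f (ψ₀ (phib ψ₀ ψ₁ (n + 1) x)))
      = f x - z * (Real.exp (v (ψ₀ x)) * f (ψ₀ x) + Real.exp (v (ψ₁ x)) * f (ψ₁ x)) :=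
  statement15_general T a ψ₀ ψ₁ r c α ε ρ hT v k hv ck h7 z hz f hf x hx

end
end
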